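/- Let f be a non-autonomous dynamical system on a compact metric space (M,d), g a non-autonomous dynamical system on a compact metric space (N,ρ), and i₀ ∈ ℤ. If there exist homeomorphisms h_i : M → N for i ≥ i₀ satisfying h_{i+1} ∘ f_i = g_i ∘ h_i for all i ≥ i₀, such that the families (h_i)_{i≥i₀} and (h_i^{-1})_{i≥i₀} are uniformly equicontinuous, then H_{i₀}(f) = H_{i₀}(g). -/

import Mathlib

open Filter Topology Set

variable {M : Type*} {N : Type*}

/-- The `n`-th composition `f_i^n = f_{i+n-1} ∘ ⋯ ∘ f_i` of a non-autonomous
dynamical system `f = (f_i)_{i ∈ ℤ}` of homeomorphisms of `M`. -/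
def nsIter [TopologicalSpace M] (f : ℤ → M ≃ₜ M) (i : ℤ) : ℕ → M → M
  | 0 => id
  | n + 1 => (f (i + n)) ∘ nsIter f i n

/-- `K` is an `(n, ε)`-spanning set for `f` at time `i`. -/
def IsSpanningSet [PseudoMetricSpace M] (f : ℤ → M ≃ₜ M) (i : ℤ) (n : ℕ) (ε : ℝ)
    (K : Set M) : Prop :=
  ∀ x : M, ∃ y ∈ K, ∀ j < n, dist (nsIter f i j x) (nsIter f i j y) < ε

/-- `E` is an `(n, ε)`-separated set for `f` at time `i`. -/
def IsSeparatedSet [PseudoMetricSpace M] (f : ℤ → M ≃ₜ M) (i : ℤ) (n : ℕ) (ε : ℝ)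
    (E : Set M) : Prop :=
  ∀ x ∈ E, ∀ y ∈ E, x ≠ y → ∃ j < n, ε < dist (nsIter f i j x) (nsIter f i j y)

/-- `r[n,i](ε,f)`: the smallest cardinality of a finite `(n, ε)`-spanning set at time `i`. -/
noncomputable def rSpan [PseudoMetricSpace M] (f : ℤ → M ≃ₜ M) (i : ℤ) (n : ℕ) (ε : ℝ) : ℕ :=
  sInf {k | ∃ K : Finset M, K.card = k ∧ IsSpanningSet f i n ε ↑K}

/-- `s[n,i](ε,f)`: the largest cardinality of an `(n, ε)`-separated set at time `i`. -/
noncomputable def sSep [PseudoMetricSpace M] (f : ℤ → M ≃ₜ M) (i : ℤ) (n : ℕ) (ε : ℝ) : ℕ :=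
  sSup {k | ∃ E : Finset M, E.card = k ∧ IsSeparatedSet f i n ε ↑E}

/-- `r[i](ε,f) = limsup_{n → ∞} (1/n) log r[n,i](ε,f)`. -/
noncomputable def rGrowth [PseudoMetricSpace M] (f : ℤ → M ≃ₜ M) (i : ℤ) (ε : ℝ) : EReal :=
  Filter.atTop.limsup fun n : ℕ => ((Real.log (rSpan f i n ε) / n : ℝ) : EReal)

/-- `s[i](ε,f) = limsup_{n → ∞} (1/n) log s[n,i](ε,f)`. -/
noncomputable def sGrowth [PseudoMetricSpace M] (f : ℤ → M ≃ₜ M) (i : ℤ) (ε : ℝ) : EReal :=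
  Filter.atTop.limsup fun n : ℕ => ((Real.log (sSep f i n ε) / n : ℝ) : EReal)

/-- The topological entropy `H_i(f) = lim_{ε → 0⁺} r[i](ε,f)`; since `ε ↦ r[i](ε,f)` is
antitone, this one-sided limit equals the supremum over `ε > 0`. -/
noncomputable def nsEntropy [PseudoMetricSpace M] (f : ℤ → M ≃ₜ M) (i : ℤ) : EReal :=
  ⨆ (ε : ℝ) (_ : 0 < ε), rGrowth f i ε

/-!
A conjugacy transports spanning sets: since `g_{i₀}^j ∘ h_{i₀} = h_{i₀+j} ∘ f_{i₀}^j`, uniform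
equicontinuity of `(h_i)_{i ≥ i₀}` turns `δ`-shadowing along `f`-orbits into `ε`-shadowing along
`g`-orbits, so the image under `h_{i₀}` of an `(n, δ)`-spanning set of `f` is `(n, ε)`-spanning for
`g`. Hence `r[n,i₀](ε,g) ≤ r[n,i₀](δ,f)` for every `n`, giving `H_{i₀}(g) ≤ H_{i₀}(f)`; the inverses
`h_i⁻¹` conjugate `g` to `f` and give the reverse inequality.
-/

open Function

theorem continuous_nsIter [TopologicalSpace M] (f : ℤ → M ≃ₜ M) (i : ℤ) (n : ℕ) :
    Continuous (nsIter f i n) := by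
  induction n with
  | zero => exact continuous_id
  | succ n ih => exact (f (i + n)).continuous.comp ih

theorem exists_finset_isSpanningSet [PseudoMetricSpace M] [CompactSpace M] (f : ℤ → M ≃ₜ M)
    (i : ℤ) (n : ℕ) {ε : ℝ} (hε : 0 < ε) : ∃ K : Finset M, IsSpanningSet f i n ε ↑K := by
  obtain ⟨K, hK⟩ := isCompact_univ.elim_finite_subcover
    (fun y : M => ⋂ j ∈ Finset.range n, nsIter f i j ⁻¹' Metric.ball (nsIter f i j y) ε)
    (fun y => isOpen_biInter_finset fun j _ =>
      Metric.isOpen_ball.preimage (continuous_nsIter f i j))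
    (fun x _ => mem_iUnion.mpr ⟨x, mem_iInter₂.mpr fun j _ => Metric.mem_ball_self hε⟩)
  refine ⟨K, fun x => ?_⟩
  obtain ⟨y, hy, hxy⟩ := mem_iUnion₂.mp (hK (mem_univ x))
  exact ⟨y, hy, fun j hj => mem_iInter₂.mp hxy j (Finset.mem_range.mpr hj)⟩

theorem nsIter_semiconj [TopologicalSpace M] [TopologicalSpace N] {f : ℤ → M ≃ₜ M}
    {g : ℤ → N ≃ₜ N} {i₀ : ℤ} {h : ℤ → M → N}
    (hconj : ∀ i : ℤ, i₀ ≤ i → ∀ x : M, h (i + 1) (f i x) = g i (h i x)) (n : ℕ) (x : M) :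
    nsIter g i₀ n (h i₀ x) = h (i₀ + n) (nsIter f i₀ n x) := by
  induction n with
  | zero => simp [nsIter]
  | succ n ih =>
    rw [nsIter, nsIter, comp_apply, comp_apply, ih, Nat.cast_succ, ← add_assoc,
      hconj (i₀ + n) (le_add_of_nonneg_right n.cast_nonneg)]

theorem IsSpanningSet.image_of_semiconj [PseudoMetricSpace M] [PseudoMetricSpace N]
    {f : ℤ → M ≃ₜ M} {g : ℤ → N ≃ₜ N} {i₀ : ℤ} {h : ℤ → M → N} {n : ℕ} {ε δ : ℝ} {K : Set M}
    (hK : IsSpanningSet f i₀ n δ K) (hsurj : Surjective (h i₀))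
    (hconj : ∀ i : ℤ, i₀ ≤ i → ∀ x : M, h (i + 1) (f i x) = g i (h i x))
    (hequi : ∀ i : ℤ, i₀ ≤ i → ∀ x y : M, dist x y < δ → dist (h i x) (h i y) < ε) :
    IsSpanningSet g i₀ n ε (h i₀ '' K) := by
  intro u
  obtain ⟨x, rfl⟩ := hsurj u
  obtain ⟨y, hy, hxy⟩ := hK x
  refine ⟨h i₀ y, mem_image_of_mem _ hy, fun j hj => ?_⟩
  rw [nsIter_semiconj hconj, nsIter_semiconj hconj]
  exact hequi _ (le_add_of_nonneg_right j.cast_nonneg) _ _ (hxy j hj)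

theorem rSpan_le_of_semiconj [PseudoMetricSpace M] [CompactSpace M] [PseudoMetricSpace N]
    {f : ℤ → M ≃ₜ M} {g : ℤ → N ≃ₜ N} {i₀ : ℤ} {h : ℤ → M → N} {ε δ : ℝ} (hδ : 0 < δ)
    (hsurj : Surjective (h i₀))
    (hconj : ∀ i : ℤ, i₀ ≤ i → ∀ x : M, h (i + 1) (f i x) = g i (h i x))
    (hequi : ∀ i : ℤ, i₀ ≤ i → ∀ x y : M, dist x y < δ → dist (h i x) (h i y) < ε) (n : ℕ) :
    rSpan g i₀ n ε ≤ rSpan f i₀ n δ := by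
  classical
  -- compactness makes the infimum defining `rSpan f` attained (otherwise it is `sInf ∅ = 0`)
  obtain ⟨K₀, hK₀⟩ := exists_finset_isSpanningSet f i₀ n hδ
  obtain ⟨K, hKcard, hK⟩ : rSpan f i₀ n δ ∈
      {k | ∃ K : Finset M, K.card = k ∧ IsSpanningSet f i₀ n δ ↑K} :=
    Nat.sInf_mem ⟨K₀.card, K₀, rfl, hK₀⟩
  have hspan : IsSpanningSet g i₀ n ε ↑(K.image (h i₀)) := by
    rw [Finset.coe_image]
    exact hK.image_of_semiconj hsurj hconj hequi
  calc rSpan g i₀ n ε ≤ (K.image (h i₀)).card := Nat.sInf_le ⟨_, rfl, hspan⟩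
    _ ≤ K.card := Finset.card_image_le
    _ = rSpan f i₀ n δ := hKcard

theorem Real.log_natCast_le_log_natCast {a b : ℕ} (hab : a ≤ b) : Real.log a ≤ Real.log b := by
  rcases a.eq_zero_or_pos with rfl | ha
  · simpa using Real.log_natCast_nonneg b
  · exact Real.log_le_log (by exact_mod_cast ha) (by exact_mod_cast hab)

theorem rGrowth_le_rGrowth [PseudoMetricSpace M] [PseudoMetricSpace N] {f : ℤ → M ≃ₜ M}
    {g : ℤ → N ≃ₜ N} {i j : ℤ} {ε δ : ℝ} (hle : ∀ n, rSpan g j n ε ≤ rSpan f i n δ) :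
    rGrowth g j ε ≤ rGrowth f i δ :=
  limsup_le_limsup (Eventually.of_forall fun n => EReal.coe_le_coe_iff.mpr <|
    div_le_div_of_nonneg_right (Real.log_natCast_le_log_natCast (hle n)) n.cast_nonneg)

theorem nsEntropy_le_of_semiconj [PseudoMetricSpace M] [CompactSpace M] [PseudoMetricSpace N]
    {f : ℤ → M ≃ₜ M} {g : ℤ → N ≃ₜ N} {i₀ : ℤ} {h : ℤ → M → N} (hsurj : Surjective (h i₀))
    (hconj : ∀ i : ℤ, i₀ ≤ i → ∀ x : M, h (i + 1) (f i x) = g i (h i x))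
    (hequi : ∀ ε > (0 : ℝ), ∃ δ > (0 : ℝ), ∀ i : ℤ, i₀ ≤ i → ∀ x y : M,
      dist x y < δ → dist (h i x) (h i y) < ε) :
    nsEntropy g i₀ ≤ nsEntropy f i₀ := by
  refine iSup₂_le fun ε hε => ?_
  obtain ⟨δ, hδ, hδε⟩ := hequi ε hε
  calc rGrowth g i₀ ε ≤ rGrowth f i₀ δ :=
        rGrowth_le_rGrowth (rSpan_le_of_semiconj hδ hsurj hconj hδε)
    _ ≤ nsEntropy f i₀ := le_iSup₂ (f := fun δ (_ : 0 < δ) => rGrowth f i₀ δ) δ hδ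

/-- if there are homeomorphisms `h_i : M → N` for `i ≥ i₀` with
`h_{i+1} ∘ f_i = g_i ∘ h_i` for all `i ≥ i₀`, such that `(h_i)_{i ≥ i₀}` and
`(h_i⁻¹)_{i ≥ i₀}` are uniformly equicontinuous, then `H_{i₀}(f) = H_{i₀}(g)`. -/
theorem nsEntropy_eq_of_posUniformConjugacy [MetricSpace M] [CompactSpace M]
    [MetricSpace N] [CompactSpace N]
    (f : ℤ → M ≃ₜ M) (g : ℤ → N ≃ₜ N) (i₀ : ℤ) (h : ℤ → M ≃ₜ N)
    (hconj : ∀ i : ℤ, i₀ ≤ i → ∀ x : M, h (i + 1) (f i x) = g i (h i x))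
    (hequi : ∀ ε > (0 : ℝ), ∃ δ > (0 : ℝ), ∀ i : ℤ, i₀ ≤ i → ∀ x y : M,
      dist x y < δ → dist (h i x) (h i y) < ε)
    (hequi' : ∀ ε > (0 : ℝ), ∃ δ > (0 : ℝ), ∀ i : ℤ, i₀ ≤ i → ∀ u v : N,
      dist u v < δ → dist ((h i).symm u) ((h i).symm v) < ε) :
    nsEntropy f i₀ = nsEntropy g i₀ := by
  have hconj_symm : ∀ i : ℤ, i₀ ≤ i → ∀ u : N,
      (h (i + 1)).symm (g i u) = f i ((h i).symm u) := by
    intro i hi u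
    rw [Homeomorph.symm_apply_eq, hconj i hi, Homeomorph.apply_symm_apply]
  exact le_antisymm
    (nsEntropy_le_of_semiconj (h := fun i => (h i).symm) (h i₀).symm.surjective hconj_symm hequi')
    (nsEntropy_le_of_semiconj (h i₀).surjective hconj hequi)
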